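/- arXiv:2112.01728 — 2 statements merged into one kernel-verified Lean document; each statement's English description precedes it below -/
import Mathlib

section
/- Let X be a normed space, C a nonempty closed convex subset of X, and r > 3·d(0,C). Then for every x with ‖x‖ ≤ r one has d(x, C ∩ B(0,r)) ≤ 3·d(x, C). -/
/-!
Fix `y₀ ∈ C` with `3‖y₀‖ < r`. Any `y ∈ C` outside the ball `B(0,r)` can be pulled back into the
ball along the segment towards `y₀`, staying in `C` by convexity; the move costs at most
`2(‖y‖ - r) ≤ 2 d(x,y)` when `‖x‖ ≤ r`, so the new point is within `3 d(x,y)` of `x`.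
-/

open Metric Set

section

variable {E : Type*} [NormedAddCommGroup E] [NormedSpace ℝ E]

theorem exists_mem_segment_norm_le_dist_le {y₀ y : E} {r : ℝ} (h₀ : 3 * ‖y₀‖ ≤ r)
    (hy : r < ‖y‖) : ∃ z ∈ segment ℝ y₀ y, ‖z‖ ≤ r ∧ dist y z ≤ 2 * (‖y‖ - r) := by
  set a := ‖y‖
  set b := ‖y₀‖
  have hb : 0 ≤ b := norm_nonneg _
  have hab : 0 < a - b := by linarith
  -- chosen so that the triangle-inequality bound `t * b + (1 - t) * a` on `‖z‖` equals `r`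
  set t := (a - r) / (a - b)
  have ht : t * (a - b) = a - r := div_mul_cancel₀ _ hab.ne'
  have ht0 : 0 ≤ t := div_nonneg (by linarith) hab.le
  have ht1 : t ≤ 1 := (div_le_one hab).2 (by linarith)
  refine ⟨t • y₀ + (1 - t) • y, ⟨t, 1 - t, ht0, by linarith, by ring, rfl⟩, ?_, ?_⟩
  · calc ‖t • y₀ + (1 - t) • y‖ ≤ t * b + (1 - t) * a := by
          refine (norm_add_le _ _).trans_eq ?_
          rw [norm_smul, norm_smul, Real.norm_of_nonneg ht0,
            Real.norm_of_nonneg (by linarith : (0 : ℝ) ≤ 1 - t)]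
      _ = r := by linarith
  · have hyz : y - (t • y₀ + (1 - t) • y) = t • (y - y₀) := by module
    calc dist y (t • y₀ + (1 - t) • y) = t * ‖y - y₀‖ := by
          rw [dist_eq_norm, hyz, norm_smul, Real.norm_of_nonneg ht0]
      _ ≤ t * (a + b) := by gcongr; exact norm_sub_le _ _
      _ ≤ t * (2 * (a - b)) := by gcongr; linarith
      _ = 2 * (a - r) := by linarith

theorem exists_mem_segment_mem_closedBall_dist_le {x y₀ : E} (y : E) {r : ℝ}
    (h₀ : 3 * ‖y₀‖ ≤ r) (hx : ‖x‖ ≤ r) :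
    ∃ z ∈ segment ℝ y₀ y, z ∈ closedBall 0 r ∧ dist x z ≤ 3 * dist x y := by
  rcases le_or_gt ‖y‖ r with hy | hy
  · exact ⟨y, right_mem_segment ℝ y₀ y, mem_closedBall_zero_iff.2 hy,
      by linarith [dist_nonneg (x := x) (y := y)]⟩
  obtain ⟨z, hz, hzr, hyz⟩ := exists_mem_segment_norm_le_dist_le h₀ hy
  have hxy : ‖y‖ - ‖x‖ ≤ dist x y := by
    rw [dist_comm, dist_eq_norm]; exact norm_sub_norm_le y x
  refine ⟨z, hz, mem_closedBall_zero_iff.2 hzr, ?_⟩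
  linarith [dist_triangle x y z]

end

theorem truncation_estimate_three_general {X : Type*} [NormedAddCommGroup X] [NormedSpace ℝ X]
    (C : Set X) (hne : C.Nonempty) (hcv : Convex ℝ C)
    (r : ℝ) (hr : 3 * infDist 0 C < r)
    (x : X) (hx : ‖x‖ ≤ r) :
    infDist x (C ∩ closedBall 0 r) ≤ 3 * infDist x C := by
  obtain ⟨y₀, hy₀C, hy₀⟩ := (infDist_lt_iff hne).1 (by linarith : infDist 0 C < r / 3)
  rw [dist_zero_left] at hy₀
  have key : ∀ y ∈ C, infDist x (C ∩ closedBall 0 r) / 3 ≤ dist x y := fun y hy => by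
    obtain ⟨z, hz, hzr, hxz⟩ := exists_mem_segment_mem_closedBall_dist_le y (by linarith) hx
    have : infDist x (C ∩ closedBall 0 r) ≤ dist x z :=
      infDist_le_dist_of_mem ⟨hcv.segment_subset hy₀C hy hz, hzr⟩
    linarith
  linarith [(le_infDist hne).2 key]

theorem truncation_estimate_three {X : Type*} [NormedAddCommGroup X] [NormedSpace ℝ X]
    (C : Set X) (hne : C.Nonempty) (hcl : IsClosed C) (hcv : Convex ℝ C)
    (r : ℝ) (hr : 3 * infDist 0 C < r)
    (x : X) (hx : ‖x‖ ≤ r) :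
    infDist x (C ∩ closedBall 0 r) ≤ 3 * infDist x C :=
  truncation_estimate_three_general C hne hcv r hr x hx
end

section
/- Consider the sweeping dynamics in ℝ² with moving set C(t) = {x : x₂ ≤ 1, t·x₁ ≤ x₂} for t ∈ [0,1] and initial point x₀ = (x_{0,1}, x_{0,2}) with x_{0,2} < x_{0,1} (so x₀ lies where the moving constraint eventually binds) and ‖x₀‖ ≥ √2. Define t₁ := x_{0,2}/x_{0,1} and t₂ := 1/√(‖x₀‖² − 1), and set x(t) := x₀ for t ∈ [0,t₁], x(t) := (‖x₀‖/√(1+t²)) · (1, t) for t ∈ (t₁, t₂), and x(t) := (1/t, 1) for t ∈ [t₂, 1]. Then x is Lipschitz continuous on [0,1], x(t) ∈ C(t) for all t, and −ẋ(t) ∈ N_{C(t)}(x(t)) for a.e. t ∈ [0,1]. -/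
open Set MeasureTheory
open scoped RealInnerProductSpace

noncomputable def vec2 (a b : ℝ) : EuclideanSpace ℝ (Fin 2) :=
  (WithLp.equiv 2 (Fin 2 → ℝ)).symm ![a, b]

/-!
Up to `t₁` the moving constraint `t x₁ ≤ x₂` does not touch `x₀`, so `x` stays put. From `t₁`
on, `x` is pushed along the circle of radius `‖x₀‖`: its velocity is orthogonal to `x`, hence a
negative multiple of the outer normal `(t, -1)` of the active constraint. At `t₂` the circle
leaves the strip `x₂ ≤ 1`, and from then on `x` sits at the corner `(1/t, 1)`, whose velocity
`(-1/t², 0)` is a negative multiple of `(1, 0)`; since `C(t)` lies in the half-plane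
`y₁ ≤ 1/t`, this is again an outer normal. The three pieces agree at `t₁` and `t₂` and have
bounded derivatives, so they glue to a Lipschitz curve.
-/

open Filter Topology
open scoped NNReal

local notation "ℝ²" => EuclideanSpace ℝ (Fin 2)

section Plane

@[simp] lemma vec2_apply_zero (a b : ℝ) : vec2 a b 0 = a := rfl

@[simp] lemma vec2_apply_one (a b : ℝ) : vec2 a b 1 = b := rfl

lemma ext_fin_two {x y : ℝ²} (h₀ : x 0 = y 0) (h₁ : x 1 = y 1) : x = y := by
  ext i
  fin_cases i
  exacts [h₀, h₁]

lemma inner_fin_two (x y : ℝ²) : ⟪x, y⟫ = x 0 * y 0 + x 1 * y 1 := by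
  simp [PiLp.inner_apply, Fin.sum_univ_two, mul_comm]

lemma norm_fin_two (x : ℝ²) : ‖x‖ = √(x 0 ^ 2 + x 1 ^ 2) := by
  simp [EuclideanSpace.norm_eq, Fin.sum_univ_two, sq_abs]

lemma vec2_eq_add (a b : ℝ) : vec2 a b = a • vec2 1 0 + b • vec2 0 1 :=
  ext_fin_two (by simp) (by simp)

lemma hasDerivAt_vec2 {f g : ℝ → ℝ} {f' g' t : ℝ} (hf : HasDerivAt f f' t)
    (hg : HasDerivAt g g' t) : HasDerivAt (fun t ↦ vec2 (f t) (g t)) (vec2 f' g') t := by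
  simpa only [← vec2_eq_add] using
    (hf.smul_const (vec2 1 0)).fun_add (hg.smul_const (vec2 0 1))

end Plane

section NormalCone

variable {E : Type*} [NormedAddCommGroup E] [InnerProductSpace ℝ E]

def normalCone (S : Set E) (x : E) : Set E := {v | ∀ y ∈ S, ⟪v, y - x⟫ ≤ 0}

lemma zero_mem_normalCone (S : Set E) (x : E) : 0 ∈ normalCone S x := by
  simp [normalCone]

lemma smul_mem_normalCone {S : Set E} {a x : E} {μ : ℝ} (hμ : 0 ≤ μ)
    (hS : ∀ y ∈ S, ⟪a, y⟫ ≤ ⟪a, x⟫) : μ • a ∈ normalCone S x := fun y hy ↦ by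
  rw [inner_smul_left, inner_sub_right]
  exact mul_nonpos_of_nonneg_of_nonpos hμ (sub_nonpos.2 (hS y hy))

end NormalCone

section Lipschitz

lemma LipschitzOnWith.congr {α β : Type*} [PseudoEMetricSpace α] [PseudoEMetricSpace β]
    {K : ℝ≥0} {f g : α → β} {s : Set α} (hg : LipschitzOnWith K g s) (hfg : EqOn f g s) :
    LipschitzOnWith K f s := fun x hx y hy ↦ by
  rw [hfg hx, hfg hy]
  exact hg hx hy

variable {E : Type*} [PseudoMetricSpace E] {K : ℝ≥0} {f : ℝ → E}

lemma LipschitzOnWith.Icc_union_Icc {a b c : ℝ} (hab : a ≤ b) (hbc : b ≤ c)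
    (h₁ : LipschitzOnWith K f (Icc a b)) (h₂ : LipschitzOnWith K f (Icc b c)) :
    LipschitzOnWith K f (Icc a c) := by
  rw [lipschitzOnWith_iff_dist_le_mul] at *
  have glue : ∀ x ∈ Icc a b, ∀ y ∈ Icc b c, dist (f x) (f y) ≤ K * dist x y := by
    intro x hx y hy
    have hb : b ∈ segment ℝ x y := by
      rw [segment_eq_Icc (hx.2.trans hy.1)]
      exact ⟨hx.2, hy.1⟩
    calc dist (f x) (f y) ≤ dist (f x) (f b) + dist (f b) (f y) := dist_triangle _ _ _
      _ ≤ K * dist x b + K * dist b y :=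
          add_le_add (h₁ x hx b ⟨hab, le_rfl⟩) (h₂ b ⟨le_rfl, hbc⟩ y hy)
      _ = K * dist x y := by rw [← mul_add, dist_add_dist_of_mem_segment hb]
  intro x hx y hy
  rcases le_total x b with hxb | hbx <;> rcases le_total y b with hyb | hby
  · exact h₁ x ⟨hx.1, hxb⟩ y ⟨hy.1, hyb⟩
  · exact glue x ⟨hx.1, hxb⟩ y ⟨hby, hy.2⟩
  · rw [dist_comm, dist_comm x]
    exact glue y ⟨hy.1, hyb⟩ x ⟨hbx, hx.2⟩
  · exact h₂ x ⟨hbx, hx.2⟩ y ⟨hby, hy.2⟩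

end Lipschitz

section ThreePiece

variable {E : Type*} {a b t : ℝ} {f g h : ℝ → E}

noncomputable def threePiece (a b : ℝ) (f g h : ℝ → E) (t : ℝ) : E :=
  if t ≤ a then f t else if t < b then g t else h t

lemma threePiece_eqOn_left : EqOn (threePiece a b f g h) f (Iic a) :=
  fun _ ht ↦ if_pos ht

lemma threePiece_eqOn_mid (hfg : f a = g a) (hgh : g b = h b) :
    EqOn (threePiece a b f g h) g (Icc a b) := by
  rintro t ⟨hat, htb⟩
  unfold threePiece
  split_ifs with h₁ h₂
  · rw [le_antisymm h₁ hat, hfg]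
  · rfl
  · rw [le_antisymm htb (not_lt.1 h₂), hgh]

lemma threePiece_eqOn_right (hab : a ≤ b) (hfg : f a = g a) (hgh : g b = h b) :
    EqOn (threePiece a b f g h) h (Ici b) := by
  intro t (hbt : b ≤ t)
  unfold threePiece
  split_ifs with h₁ h₂
  · obtain rfl : a = t := le_antisymm (hab.trans hbt) h₁
    obtain rfl : b = a := le_antisymm hbt hab
    rw [hfg, hgh]
  · exact absurd h₂ (not_lt.2 hbt)
  · rfl

lemma threePiece_eventuallyEq_left (ht : t < a) : threePiece a b f g h =ᶠ[𝓝 t] f :=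
  threePiece_eqOn_left.eventuallyEq_of_mem (Iic_mem_nhds ht)

lemma threePiece_eventuallyEq_mid (hat : a < t) (htb : t < b) :
    threePiece a b f g h =ᶠ[𝓝 t] g := by
  filter_upwards [Ioo_mem_nhds hat htb] with s hs
  simp [threePiece, not_le.2 hs.1, hs.2]

lemma threePiece_eventuallyEq_right (hab : a ≤ b) (hbt : b < t) :
    threePiece a b f g h =ᶠ[𝓝 t] h := by
  filter_upwards [Ioi_mem_nhds hbt] with s (hs : b < s)
  simp [threePiece, not_le.2 (hab.trans_lt hs), not_lt.2 hs.le]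

end ThreePiece


lemma LipschitzOnWith.threePiece {E : Type*} [PseudoMetricSpace E] {K : ℝ≥0} {a b lo hi : ℝ}
    {f g h : ℝ → E} (hla : lo ≤ a) (hab : a ≤ b) (hbh : b ≤ hi) (hfg : f a = g a)
    (hgh : g b = h b) (hf : LipschitzOnWith K f (Icc lo a)) (hg : LipschitzOnWith K g (Icc a b))
    (hh : LipschitzOnWith K h (Icc b hi)) :
    LipschitzOnWith K (threePiece a b f g h) (Icc lo hi) :=
  (hf.congr (threePiece_eqOn_left.mono Icc_subset_Iic_self)).Icc_union_Icc hla (hab.trans hbh)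
    ((hg.congr (threePiece_eqOn_mid hfg hgh)).Icc_union_Icc hab hbh
      (hh.congr ((threePiece_eqOn_right hab hfg hgh).mono Icc_subset_Ici_self)))

section Sweeping

variable {E : Type*} [NormedAddCommGroup E] [InnerProductSpace ℝ E]

def SolvesSweepingAt (C : ℝ → Set E) (x : ℝ → E) (t : ℝ) : Prop :=
  ∃ d, HasDerivAt x d t ∧ -d ∈ normalCone (C t) (x t)

lemma SolvesSweepingAt.congr_of_eventuallyEq {C : ℝ → Set E} {x y : ℝ → E} {t : ℝ}
    (hx : SolvesSweepingAt C x t) (hyx : y =ᶠ[𝓝 t] x) : SolvesSweepingAt C y t := by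
  obtain ⟨d, hd, hN⟩ := hx
  exact ⟨d, hd.congr_of_eventuallyEq hyx, hyx.eq_of_nhds ▸ hN⟩

lemma solvesSweepingAt_const (C : ℝ → Set E) (x₀ : E) (t : ℝ) :
    SolvesSweepingAt C (fun _ ↦ x₀) t :=
  ⟨0, hasDerivAt_const t x₀, by simpa using zero_mem_normalCone _ _⟩

lemma ae_solvesSweepingAt_threePiece {C : ℝ → Set E} {a b : ℝ} {f g h : ℝ → E} (hab : a ≤ b)
    (hf : ∀ t < a, SolvesSweepingAt C f t) (hg : ∀ t ∈ Ioo a b, SolvesSweepingAt C g t)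
    (hh : ∀ t, b < t → SolvesSweepingAt C h t) :
    ∀ᵐ t, SolvesSweepingAt C (threePiece a b f g h) t := by
  filter_upwards [(toFinite {a, b}).countable.ae_notMem volume] with t ht
  obtain ⟨hta, htb⟩ : t ≠ a ∧ t ≠ b := not_or.1 ht
  rcases hta.lt_or_gt with hta | hat
  · exact (hf t hta).congr_of_eventuallyEq (threePiece_eventuallyEq_left hta)
  rcases htb.lt_or_gt with htb | hbt
  · exact (hg t ⟨hat, htb⟩).congr_of_eventuallyEq (threePiece_eventuallyEq_mid hat htb)
  · exact (hh t hbt).congr_of_eventuallyEq (threePiece_eventuallyEq_right hab hbt)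

end Sweeping

def sweepSet (t : ℝ) : Set ℝ² := {x | x 1 ≤ 1 ∧ t * x 0 ≤ x 1}

noncomputable def arcPoint (r t : ℝ) : ℝ² := (r / √(1 + t ^ 2)) • vec2 1 t

noncomputable def cornerPoint (t : ℝ) : ℝ² := vec2 t⁻¹ 1

section Arc

variable {r t : ℝ}

lemma hasDerivAt_sqrt_one_add_sq (t : ℝ) :
    HasDerivAt (fun t ↦ √(1 + t ^ 2)) (t / √(1 + t ^ 2)) t := by
  have h := ((hasDerivAt_pow 2 t).const_add 1).sqrt (by positivity)
  convert h using 1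
  push_cast
  ring

lemma hasDerivAt_arcPoint (r t : ℝ) :
    HasDerivAt (arcPoint r) (-((r / √(1 + t ^ 2) ^ 3) • vec2 t (-1))) t := by
  have hs : 0 < √(1 + t ^ 2) := by positivity
  have hs2 : √(1 + t ^ 2) ^ 2 = 1 + t ^ 2 := Real.sq_sqrt (by positivity)
  have h := ((hasDerivAt_const t r).div (hasDerivAt_sqrt_one_add_sq t) hs.ne').smul
    (hasDerivAt_vec2 (hasDerivAt_const t 1) (hasDerivAt_id t))
  refine h.congr_deriv (ext_fin_two ?_ ?_) <;> simp <;> field_simp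
  linear_combination r * hs2

lemma lipschitzWith_arcPoint (r : ℝ≥0) : LipschitzWith r (arcPoint r) := by
  refine lipschitzWith_of_nnnorm_deriv_le (fun t ↦ (hasDerivAt_arcPoint r t).differentiableAt)
    fun t ↦ ?_
  have hs2 : √(1 + t ^ 2) ^ 2 = 1 + t ^ 2 := Real.sq_sqrt (by positivity)
  rw [(hasDerivAt_arcPoint r t).deriv, ← NNReal.coe_le_coe, coe_nnnorm, norm_neg, norm_smul,
    norm_fin_two, Real.norm_of_nonneg (by positivity)]
  simp only [vec2_apply_zero, vec2_apply_one, neg_sq, one_pow, add_comm (t ^ 2)]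
  calc ((r : ℝ) / √(1 + t ^ 2) ^ 3) * √(1 + t ^ 2) = r / √(1 + t ^ 2) ^ 2 := by
        field_simp
    _ = r / (1 + t ^ 2) := by rw [hs2]
    _ ≤ r := div_le_self r.2 (by nlinarith)

lemma arcPoint_norm_div {x : ℝ²} (hx : 0 < x 0) : arcPoint ‖x‖ (x 1 / x 0) = x := by
  have hn : 0 < ‖x‖ := by
    rw [norm_fin_two]
    exact Real.sqrt_pos.2 (by positivity)
  have hs : √(1 + (x 1 / x 0) ^ 2) = ‖x‖ / x 0 := by
    rw [Real.sqrt_eq_iff_mul_self_eq_of_pos (by positivity), norm_fin_two]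
    field_simp
    rw [Real.sq_sqrt (by positivity)]
  refine ext_fin_two ?_ ?_ <;> simp [arcPoint, hs] <;> field_simp

lemma arcPoint_eq_cornerPoint (h : r * t = √(1 + t ^ 2)) : arcPoint r t = cornerPoint t := by
  have hs : 0 < √(1 + t ^ 2) := by positivity
  have ht : t ≠ 0 := by
    rintro rfl
    norm_num at h
  refine ext_fin_two ?_ ?_ <;> simp [arcPoint, cornerPoint] <;> field_simp <;> linarith

lemma arcPoint_mem_sweepSet (h : r * t ≤ √(1 + t ^ 2)) : arcPoint r t ∈ sweepSet t := by
  have hs : 0 < √(1 + t ^ 2) := by positivity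
  refine ⟨?_, ?_⟩ <;> simp [arcPoint]
  · rwa [div_mul_eq_mul_div, div_le_one hs]
  · rw [mul_comm]

lemma solvesSweepingAt_arcPoint (hr : 0 ≤ r) (t : ℝ) :
    SolvesSweepingAt sweepSet (arcPoint r) t := by
  refine ⟨_, hasDerivAt_arcPoint r t, ?_⟩
  rw [neg_neg]
  refine smul_mem_normalCone (by positivity) fun y hy ↦ ?_
  simp only [inner_fin_two, arcPoint, PiLp.smul_apply, vec2_apply_zero, vec2_apply_one,
    smul_eq_mul]
  linarith [hy.2]

end Arc

section Corner

variable {t : ℝ}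

lemma hasDerivAt_cornerPoint (ht : t ≠ 0) :
    HasDerivAt cornerPoint (-((t ^ 2)⁻¹ • vec2 1 0)) t := by
  refine (hasDerivAt_vec2 (hasDerivAt_inv ht) (hasDerivAt_const t 1)).congr_deriv
    (ext_fin_two ?_ ?_) <;> simp

lemma lipschitzOnWith_cornerPoint {b : ℝ} (hb : 0 < b) :
    LipschitzOnWith (b ^ 2)⁻¹.toNNReal cornerPoint (Ici b) := by
  refine (convex_Ici b).lipschitzOnWith_of_nnnorm_hasDerivWithin_le
    (fun t ht ↦ (hasDerivAt_cornerPoint (hb.trans_le ht).ne').hasDerivWithinAt)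
    fun t (ht : b ≤ t) ↦ ?_
  rw [← NNReal.coe_le_coe, coe_nnnorm, Real.coe_toNNReal _ (by positivity), norm_neg, norm_smul,
    norm_fin_two]
  simpa using inv_anti₀ (by positivity) (pow_le_pow_left₀ hb.le ht 2)

lemma cornerPoint_mem_sweepSet (ht : t ≠ 0) : cornerPoint t ∈ sweepSet t :=
  ⟨le_rfl, by simp [cornerPoint, ht]⟩

lemma solvesSweepingAt_cornerPoint (ht : 0 < t) : SolvesSweepingAt sweepSet cornerPoint t := by
  refine ⟨_, hasDerivAt_cornerPoint ht.ne', ?_⟩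
  rw [neg_neg]
  refine smul_mem_normalCone (by positivity) fun y hy ↦ ?_
  simp only [inner_fin_two, cornerPoint, vec2_apply_zero, vec2_apply_one, one_mul, zero_mul,
    add_zero]
  rw [← one_div, le_div_iff₀' ht]
  linarith [hy.1, hy.2]

end Corner

lemma mem_sweepSet_of_le_div {x : ℝ²} {t : ℝ} (hx1 : x 1 ≤ 1) (hx0 : 0 < x 0)
    (ht : t ≤ x 1 / x 0) : x ∈ sweepSet t :=
  ⟨hx1, (le_div_iff₀ hx0).1 ht⟩

lemma mul_le_sqrt_one_add_sq_of_le {r t T : ℝ} (ht : 0 ≤ t) (htT : t ≤ T)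
    (hT : r * T = √(1 + T ^ 2)) : r * t ≤ √(1 + t ^ 2) := by
  have hT2 : (r * T) ^ 2 = 1 + T ^ 2 := by rw [hT, Real.sq_sqrt (by positivity)]
  have hr : 0 < r ^ 2 - 1 := by nlinarith [sq_nonneg T]
  apply Real.le_sqrt_of_sq_le
  nlinarith [mul_le_mul_of_nonneg_right (pow_le_pow_left₀ ht htT 2) hr.le]

lemma one_div_sqrt_sq_sub_one_mem_Ioc {r : ℝ} (hr : √2 ≤ r) : 1 / √(r ^ 2 - 1) ∈ Ioc 0 1 := by
  have h2 : 2 ≤ r ^ 2 := by simpa using pow_le_pow_left₀ (Real.sqrt_nonneg 2) hr 2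
  have hu : 0 < √(r ^ 2 - 1) := Real.sqrt_pos.2 (by linarith)
  exact ⟨one_div_pos.2 hu, (div_le_one hu).2 (Real.le_sqrt_of_sq_le (by linarith))⟩

lemma mul_one_div_sqrt_sq_sub_one {r : ℝ} (hr : 1 < r) :
    r * (1 / √(r ^ 2 - 1)) = √(1 + (1 / √(r ^ 2 - 1)) ^ 2) := by
  have hu : 0 < √(r ^ 2 - 1) := Real.sqrt_pos.2 (by nlinarith)
  have hu2 : √(r ^ 2 - 1) ^ 2 = r ^ 2 - 1 := Real.sq_sqrt (by nlinarith)
  symm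
  rw [Real.sqrt_eq_iff_mul_self_eq_of_pos (by positivity)]
  field_simp
  linear_combination -hu2

lemma div_le_one_div_sqrt_norm_sq_sub_one {x : ℝ²} (hx0 : 0 < x 0) (hx1 : x 1 ≤ 1)
    (hx : 1 < ‖x‖) : x 1 / x 0 ≤ 1 / √(‖x‖ ^ 2 - 1) := by
  have hu : 0 < √(‖x‖ ^ 2 - 1) := Real.sqrt_pos.2 (by nlinarith)
  rw [div_le_div_iff₀ hx0 hu, one_mul]
  rcases le_total (x 1) 0 with hx1' | hx1'
  · nlinarith
  apply le_of_sq_le_sq _ hx0.le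
  rw [mul_pow, Real.sq_sqrt (by nlinarith), norm_fin_two, Real.sq_sqrt (by positivity)]
  nlinarith [mul_nonneg (sub_nonneg.2 (pow_le_one₀ (n := 2) hx1' hx1))
    (add_nonneg (sq_nonneg (x 0)) (sq_nonneg (x 1)))]

theorem explicit_sweeping_solution
    (C : ℝ → Set (EuclideanSpace ℝ (Fin 2)))
    (hC : ∀ t, C t = {x : EuclideanSpace ℝ (Fin 2) | x 1 ≤ 1 ∧ t * x 0 ≤ x 1})
    (x₀ : EuclideanSpace ℝ (Fin 2)) (hx₀C : x₀ ∈ C 0)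
    (h12 : x₀ 1 < x₀ 0) (hnorm : Real.sqrt 2 ≤ ‖x₀‖)
    (t₁ t₂ : ℝ) (ht₁ : t₁ = x₀ 1 / x₀ 0) (ht₂ : t₂ = 1 / Real.sqrt (‖x₀‖ ^ 2 - 1))
    (xf : ℝ → EuclideanSpace ℝ (Fin 2))
    (hxf : ∀ t, xf t = if t ≤ t₁ then x₀
      else if t < t₂ then (‖x₀‖ / Real.sqrt (1 + t ^ 2)) • vec2 1 t
      else vec2 t⁻¹ 1) :
    (∃ K : NNReal, LipschitzOnWith K xf (Icc 0 1)) ∧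
    (∀ t ∈ Icc (0:ℝ) 1, xf t ∈ C t) ∧
    (∀ᵐ t ∂(volume.restrict (Ioo (0:ℝ) 1)), ∃ d : EuclideanSpace ℝ (Fin 2),
      HasDerivAt xf d t ∧ ∀ y ∈ C t, ⟪-d, y - xf t⟫ ≤ 0) := by
  obtain rfl : C = sweepSet := funext hC
  obtain rfl : xf = threePiece t₁ t₂ (fun _ ↦ x₀) (arcPoint ‖x₀‖) cornerPoint := funext hxf
  obtain ⟨hle_one, hnonneg⟩ : x₀ 1 ≤ 1 ∧ 0 ≤ x₀ 1 := by simpa [sweepSet] using hx₀C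
  have hpos : 0 < x₀ 0 := hnonneg.trans_lt h12
  have hr : 1 < ‖x₀‖ := Real.one_lt_sqrt_two.trans_le hnorm
  have ht₁0 : 0 ≤ t₁ := ht₁ ▸ div_nonneg hnonneg hpos.le
  have ht₁₂ : t₁ ≤ t₂ := ht₁ ▸ ht₂ ▸ div_le_one_div_sqrt_norm_sq_sub_one hpos hle_one hr
  obtain ⟨ht₂0, ht₂1⟩ : t₂ ∈ Ioc 0 1 := ht₂ ▸ one_div_sqrt_sq_sub_one_mem_Ioc hnorm
  have hcorner : ‖x₀‖ * t₂ = √(1 + t₂ ^ 2) := ht₂ ▸ mul_one_div_sqrt_sq_sub_one hr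
  have hstart : x₀ = arcPoint ‖x₀‖ t₁ := ht₁ ▸ (arcPoint_norm_div hpos).symm
  refine ⟨⟨max ‖x₀‖₊ (t₂ ^ 2)⁻¹.toNNReal, ?_⟩, ?_, ?_⟩
  · exact LipschitzOnWith.threePiece ht₁0 ht₁₂ ht₂1 hstart (arcPoint_eq_cornerPoint hcorner)
      ((LipschitzWith.const x₀).lipschitzOnWith.weaken bot_le)
      ((lipschitzWith_arcPoint ‖x₀‖₊).lipschitzOnWith.weaken le_sup_left)
      (((lipschitzOnWith_cornerPoint ht₂0).mono Icc_subset_Ici_self).weaken le_sup_right)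
  · rintro t ⟨ht0, -⟩
    unfold threePiece
    split_ifs with h₁ h₂
    · exact mem_sweepSet_of_le_div hle_one hpos (ht₁ ▸ h₁)
    · exact arcPoint_mem_sweepSet (mul_le_sqrt_one_add_sq_of_le ht0 h₂.le hcorner)
    · exact cornerPoint_mem_sweepSet (by linarith)
  · exact ae_restrict_of_ae (ae_solvesSweepingAt_threePiece ht₁₂
      (fun t _ ↦ solvesSweepingAt_const _ _ t)
      (fun t _ ↦ solvesSweepingAt_arcPoint (norm_nonneg _) t)
      fun t ht ↦ solvesSweepingAt_cornerPoint (ht₂0.trans ht))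
end
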